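/- arXiv:2206.05966 — 7 statements merged into one kernel-verified Lean document; each statement's English description precedes it below -/
import Mathlib

section
/- Given a laminar set family D = (D_1, …, D_n) of subsets of a finite ground set, the graph G = (V, E) with V = {1,…,n} and edges E = {(i,j) : i ≠ j and (D_i ⊆ D_j or D_j ⊆ D_i)} is chordal, i.e., every cycle of length at least four has a chord. -/
open Finset SimpleGraph

namespace SimpleGraph.Walk

variable {V : Type*} {G : SimpleGraph V}

private lemma support_getElem?_aux {u v : V} (w : G.Walk u v) :
    ∀ i ≤ w.length, w.support[i]? = some (w.getVert i) := by
  induction w with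
  | nil =>
    intro i hi
    obtain rfl : i = 0 := Nat.le_zero.mp hi
    simp
  | cons h p ih =>
    intro i hi
    cases i with
    | zero => simp
    | succ i =>
      rw [support_cons, List.getElem?_cons_succ, getVert_cons_succ]
      exact ih i (by simpa using hi)

private lemma support_tail_getElem?_aux {u v : V} (w : G.Walk u v) (i : ℕ)
    (h : i + 1 ≤ w.length) : w.support.tail[i]? = some (w.getVert (i + 1)) := by
  have := support_getElem?_aux w (i + 1) h
  rw [support_eq_cons, List.getElem?_cons_succ] at this
  exact this

private lemma edges_exists_getVert_aux {u v : V} (w : G.Walk u v) {e} (he : e ∈ w.edges) :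
    ∃ i < w.length, e = s(w.getVert i, w.getVert (i + 1)) := by
  induction w with
  | nil => simp at he
  | cons h p ih =>
    rw [edges_cons] at he
    rcases List.mem_cons.mp he with rfl | he
    · exact ⟨0, by simp, by simp [getVert_cons _ _ one_ne_zero]⟩
    · obtain ⟨i, hi, rfl⟩ := ih he
      exact ⟨i + 1, by simpa using hi, by simp⟩

private lemma isCycle_getVert_inj {v : V} {c : G.Walk v v} (hc : c.IsCycle)
    {i j : ℕ} (hi1 : 1 ≤ i) (hi2 : i ≤ c.length) (hj1 : 1 ≤ j) (hj2 : j ≤ c.length)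
    (h : c.getVert i = c.getVert j) : i = j := by
  have hlen : c.support.tail.length = c.length := by
    have := length_support c
    rw [support_eq_cons] at this
    simpa using this
  have hi : c.support.tail[i - 1]? = some (c.getVert i) := by
    have := support_tail_getElem?_aux c (i - 1) (by omega)
    rwa [Nat.sub_add_cancel hi1] at this
  have hj : c.support.tail[j - 1]? = some (c.getVert j) := by
    have := support_tail_getElem?_aux c (j - 1) (by omega)
    rwa [Nat.sub_add_cancel hj1] at this
  have := (List.getElem?_inj (l := c.support.tail) (i := i - 1) (j := j - 1)
    (by omega) hc.support_nodup).mp (by rw [hi, hj, h])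
  omega

private lemma mem_tail_of_mem_support_closed {v : V} (p : G.Walk v v) (hp : p.length ≠ 0)
    {x : V} (hx : x ∈ p.support) : x ∈ p.support.tail := by
  rw [support_eq_cons] at hx
  rcases List.mem_cons.mp hx with rfl | hx
  · have h1 : p.support.tail[p.length - 1]? = some x := by
      have := support_tail_getElem?_aux p (p.length - 1) (by omega)
      rwa [Nat.sub_add_cancel (by omega), getVert_length] at this
    rcases List.getElem?_eq_some_iff.mp h1 with ⟨hlt, hget⟩
    have := List.getElem_mem hlt
    rwa [hget] at this
  · exact hx

end SimpleGraph.Walk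

/-- Lemma (chordality): the containment graph of a laminar set family is chordal,
i.e. every cycle of length at least four has a chord (an edge of the graph
between two vertices of the cycle which is not itself a cycle edge). -/
theorem laminar_containment_graph_chordal {α : Type*} [DecidableEq α] (n : ℕ)
    (D : Fin n → Finset α)
    (hlam : ∀ i j, D i ∩ D j = ∅ ∨ D i ∩ D j = D i ∨ D i ∩ D j = D j) :
    ∀ (u : Fin n)
      (c : (SimpleGraph.fromRel (fun i j : Fin n => D i ⊆ D j)).Walk u u),
      c.IsCycle → 4 ≤ c.length →
      ∃ i ∈ c.support, ∃ j ∈ c.support,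
        (SimpleGraph.fromRel (fun i j : Fin n => D i ⊆ D j)).Adj i j ∧
        s(i, j) ∉ c.edges := by
  intro u c hc hlen
  -- choose a vertex of minimum cardinality on the cycle
  obtain ⟨v, hv, hmin⟩ : ∃ v ∈ c.support, ∀ x ∈ c.support, (D v).card ≤ (D x).card := by
    obtain ⟨v, hv, hmin⟩ := c.support.toFinset.exists_min_image (fun i => (D i).card)
      ⟨u, by simp [c.start_mem_support]⟩
    exact ⟨v, by simpa using hv, fun x hx => hmin x (by simpa using hx)⟩
  set c' := c.rotate v hv with hc'def
  have hcyc : c'.IsCycle := hc.rotate hv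
  have hlen' : c'.length = c.length := by
    have := (c.rotate_edges v hv).perm.length_eq
    rwa [SimpleGraph.Walk.length_edges, SimpleGraph.Walk.length_edges] at this
  have hL4 : 4 ≤ c'.length := by omega
  have hsupp : ∀ x, x ∈ c'.support → x ∈ c.support := by
    intro x hx
    have := SimpleGraph.Walk.mem_tail_of_mem_support_closed c' (by omega) hx
    rw [(SimpleGraph.Walk.support_rotate c v hv).mem_iff] at this
    exact List.mem_of_mem_tail this
  have hedge : ∀ e, e ∈ c'.edges ↔ e ∈ c.edges :=
    fun e => (c.rotate_edges v hv).perm.mem_iff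
  have Inj : ∀ i j : ℕ, 1 ≤ i → i ≤ c'.length → 1 ≤ j → j ≤ c'.length →
      c'.getVert i = c'.getVert j → i = j :=
    fun i j h1 h2 h3 h4 h5 => SimpleGraph.Walk.isCycle_getVert_inj hcyc h1 h2 h3 h4 h5
  have hg0 : c'.getVert 0 = v := c'.getVert_zero
  have hgL : c'.getVert c'.length = v := c'.getVert_length
  have hmin' : ∀ x, x ∈ c'.support → (D v).card ≤ (D x).card :=
    fun x hx => hmin x (hsupp x hx)
  have hmemget : ∀ i, i ≤ c'.length → c'.getVert i ∈ c'.support := fun i hi =>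
    SimpleGraph.Walk.mem_support_iff_exists_getVert.mpr ⟨i, rfl, hi⟩
  rcases (D v).eq_empty_or_nonempty with hDv | hDv
  · -- empty case: v is adjacent to everything; chord from v to the vertex two steps away
    set w := c'.getVert 2 with hw
    have hvw : v ≠ w := by
      intro h
      have := Inj 2 c'.length (by omega) (by omega) (by omega) le_rfl
        (hw.symm.trans (h.symm.trans hgL.symm))
      omega
    refine ⟨v, hv, w, hsupp w (hmemget 2 (by omega)), ?_, ?_⟩
    · exact (SimpleGraph.fromRel_adj _ _ _).mpr ⟨hvw, Or.inl (hDv ▸ Finset.empty_subset _)⟩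
    · intro hmem
      rw [← hedge] at hmem
      obtain ⟨i, hi, heq⟩ := SimpleGraph.Walk.edges_exists_getVert_aux c' hmem
      rcases Sym2.eq_iff.mp heq.symm with ⟨h1, h2⟩ | ⟨h1, h2⟩
      · -- getVert i = v, getVert (i+1) = w
        have hi1 : i + 1 = 2 := Inj (i + 1) 2 (by omega) (by omega) (by omega) (by omega)
          (h2.trans hw)
        have h1' : c'.getVert 1 = c'.getVert c'.length := by
          have hieq : i = 1 := by omega
          subst hieq
          exact h1.trans hgL.symm
        have := Inj 1 c'.length (by omega) (by omega) (by omega) le_rfl h1'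
        omega
      · -- getVert i = w, getVert (i+1) = v
        have hiL : i + 1 = c'.length :=
          Inj (i + 1) c'.length (by omega) (by omega) (by omega) le_rfl (h2.trans hgL.symm)
        have : i = 2 := Inj i 2 (by omega) (by omega) (by omega) (by omega) (h1.trans hw)
        omega
  · -- nonempty case: chord between the two cycle-neighbours of v
    set a := c'.getVert 1 with ha
    set b := c'.getVert (c'.length - 1) with hb
    have hva : (SimpleGraph.fromRel (fun i j : Fin n => D i ⊆ D j)).Adj v a := by
      have := c'.adj_getVert_succ (show 0 < c'.length by omega)
      rwa [hg0] at this
    have hbv : (SimpleGraph.fromRel (fun i j : Fin n => D i ⊆ D j)).Adj b v := by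
      have := c'.adj_getVert_succ (show c'.length - 1 < c'.length by omega)
      rwa [show c'.length - 1 + 1 = c'.length by omega, hgL] at this
    have hva' := (SimpleGraph.fromRel_adj _ _ _).mp hva
    have hbv' := (SimpleGraph.fromRel_adj _ _ _).mp hbv
    have hamem : a ∈ c'.support := hmemget 1 (by omega)
    have hbmem : b ∈ c'.support := hmemget (c'.length - 1) (by omega)
    have hsubA : D v ⊆ D a := by
      rcases hva'.2 with h | h
      · exact h
      · rw [Finset.eq_of_subset_of_card_le h (hmin' a hamem)]
    have hsubB : D v ⊆ D b := by
      rcases hbv'.2 with h | h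
      · rw [← Finset.eq_of_subset_of_card_le h (hmin' b hbmem)]
      · exact h
    have hab : a ≠ b := by
      intro h
      have := Inj 1 (c'.length - 1) (by omega) (by omega) (by omega) (by omega)
        (ha.symm.trans (h.trans hb))
      omega
    have hadj : (SimpleGraph.fromRel (fun i j : Fin n => D i ⊆ D j)).Adj a b := by
      refine (SimpleGraph.fromRel_adj _ _ _).mpr ⟨hab, ?_⟩
      have hne : (D a ∩ D b).Nonempty :=
        hDv.mono (Finset.subset_inter hsubA hsubB)
      rcases hlam a b with h | h | h
      · exact absurd h hne.ne_empty
      · exact Or.inl (Finset.inter_eq_left.mp h)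
      · exact Or.inr (Finset.inter_eq_right.mp h)
    refine ⟨a, hsupp a hamem, b, hsupp b hbmem, hadj, ?_⟩
    intro hmem
    rw [← hedge] at hmem
    obtain ⟨i, hi, heq⟩ := SimpleGraph.Walk.edges_exists_getVert_aux c' hmem
    rcases Sym2.eq_iff.mp heq.symm with ⟨h1, h2⟩ | ⟨h1, h2⟩
    · -- getVert i = a, getVert (i+1) = b
      rcases Nat.eq_zero_or_pos i with rfl | hipos
      · exact hva'.1 (hg0.symm.trans (h1.trans ha))
      · have hieq : i = 1 := Inj i 1 (by omega) (by omega) (by omega) (by omega)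
          (h1.trans (ha.symm ▸ rfl))
        subst hieq
        have := Inj 2 (c'.length - 1) (by omega) (by omega) (by omega) (by omega)
          (h2.trans hb)
        omega
    · -- getVert i = b, getVert (i+1) = a
      have : i + 1 = 1 := Inj (i + 1) 1 (by omega) (by omega) (by omega) (by omega)
        (h2.trans ha)
      have hi0 : i = 0 := by omega
      subst hi0
      exact hbv'.1 ((hg0.symm.trans h1).symm)
end

section
/- In the single-minded setting, for any MaxPE set Q (a set maximizing PE(W) = ∑_{i∈N} min(b_i, v_i(W)) − C(W) over W ⊆ M) and any UWO-WP outcome W (a set maximizing SW(W) = ∑_{i∈N} v_i(W) − C(W) subject to C(W) ≤ ∑_i min(b_i, v_i(W))), the set W' = W ∪ (Q \ W) = W ∪ Q also satisfies C(W') ≤ ∑_i min(b_i, v_i(W')) and SW(W') ≥ SW(W); hence there exists a UWO-WP outcome containing Q. -/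
open Finset

/-- Single-minded valuation of agent `i` at bundle `W`. -/
def smVal {n m : ℕ} (D : Fin n → Finset (Fin m)) (z : Fin n → ℝ)
    (i : Fin n) (W : Finset (Fin m)) : ℝ :=
  if D i ⊆ W then z i else 0

/-- Excess payment extraction. -/
def PE {n m : ℕ} (D : Fin n → Finset (Fin m)) (z b : Fin n → ℝ)
    (C : Fin m → ℝ) (W : Finset (Fin m)) : ℝ :=
  (∑ i, min (b i) (smVal D z i W)) - ∑ j ∈ W, C j

/-- A set `W` can be funded feasibly while respecting weak participation. -/
def WPfundable {n m : ℕ} (D : Fin n → Finset (Fin m)) (z b : Fin n → ℝ)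
    (C : Fin m → ℝ) (W : Finset (Fin m)) : Prop :=
  ∑ j ∈ W, C j ≤ ∑ i, min (b i) (smVal D z i W)

/-- Social welfare of a bundle. -/
def SW {n m : ℕ} (D : Fin n → Finset (Fin m)) (z : Fin n → ℝ)
    (C : Fin m → ℝ) (W : Finset (Fin m)) : ℝ :=
  (∑ i, smVal D z i W) - ∑ j ∈ W, C j

/-- Lemma: in the single-minded setting, for any MaxPE set `Q` and any UWO-WP
outcome `W`, the union `W ∪ Q` is WP-fundable with weakly greater welfare;
hence some UWO-WP outcome contains `Q`. -/
theorem maxPE_subset_uwowp {n m : ℕ} (D : Fin n → Finset (Fin m)) (z b : Fin n → ℝ)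
    (C : Fin m → ℝ)
    (hz : ∀ i, 0 ≤ z i) (hb : ∀ i, 0 ≤ b i) (hC : ∀ j, 0 ≤ C j)
    (Q : Finset (Fin m)) (hQ : ∀ S : Finset (Fin m), PE D z b C S ≤ PE D z b C Q)
    (W : Finset (Fin m)) (hWf : WPfundable D z b C W)
    (hWopt : ∀ S : Finset (Fin m), WPfundable D z b C S → SW D z C S ≤ SW D z C W) :
    WPfundable D z b C (W ∪ Q) ∧ SW D z C W ≤ SW D z C (W ∪ Q) ∧
    ∃ W' : Finset (Fin m), WPfundable D z b C W' ∧
      (∀ S : Finset (Fin m), WPfundable D z b C S → SW D z C S ≤ SW D z C W') ∧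
      Q ⊆ W' := by
  classical
  -- supermodularity of min(b, smVal) pointwise
  have key : ∀ i, min (b i) (smVal D z i W) + min (b i) (smVal D z i Q) ≤
      min (b i) (smVal D z i (W ∪ Q)) + min (b i) (smVal D z i (W ∩ Q)) := by
    intro i
    unfold smVal
    by_cases hW : D i ⊆ W <;> by_cases hq : D i ⊆ Q
    · have h1 : D i ⊆ W ∪ Q := hW.trans Finset.subset_union_left
      have h2 : D i ⊆ W ∩ Q := Finset.subset_inter hW hq
      simp [h1, h2, hW, hq]
    · have h1 : D i ⊆ W ∪ Q := hW.trans Finset.subset_union_left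
      have h2 : ¬ D i ⊆ W ∩ Q := fun h => hq (h.trans Finset.inter_subset_right)
      simp [h1, h2, hW, hq]
    · have h1 : D i ⊆ W ∪ Q := hq.trans Finset.subset_union_right
      have h2 : ¬ D i ⊆ W ∩ Q := fun h => hW (h.trans Finset.inter_subset_left)
      simp [h1, h2, hW, hq]
      linarith [min_le_left (b i) (z i)]
    · have h2 : ¬ D i ⊆ W ∩ Q := fun h => hW (h.trans Finset.inter_subset_left)
      by_cases h1 : D i ⊆ W ∪ Q
      · simp [h1, h2, hW, hq, min_eq_right (hb i)]
        exact ⟨hb i, hz i⟩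
      · simp [h1, h2, hW, hq]
  have hsum : (∑ i, min (b i) (smVal D z i W)) + (∑ i, min (b i) (smVal D z i Q)) ≤
      (∑ i, min (b i) (smVal D z i (W ∪ Q))) + (∑ i, min (b i) (smVal D z i (W ∩ Q))) := by
    rw [← Finset.sum_add_distrib, ← Finset.sum_add_distrib]
    exact Finset.sum_le_sum fun i _ => key i
  have hcost : (∑ j ∈ W ∪ Q, C j) + (∑ j ∈ W ∩ Q, C j) = (∑ j ∈ W, C j) + (∑ j ∈ Q, C j) :=
    Finset.sum_union_inter
  have hsup : PE D z b C W + PE D z b C Q ≤ PE D z b C (W ∪ Q) + PE D z b C (W ∩ Q) := by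
    unfold PE; linarith
  have hPEW : 0 ≤ PE D z b C W := sub_nonneg.mpr hWf
  have hPEQ : PE D z b C (W ∩ Q) ≤ PE D z b C Q := hQ _
  have hPEU : PE D z b C W ≤ PE D z b C (W ∪ Q) := by linarith
  have fundU : WPfundable D z b C (W ∪ Q) := by
    have : 0 ≤ PE D z b C (W ∪ Q) := le_trans hPEW hPEU
    exact sub_nonneg.mp this
  -- SW comparison
  have key2 : ∀ i, min (b i) (smVal D z i (W ∪ Q)) - min (b i) (smVal D z i W) ≤
      smVal D z i (W ∪ Q) - smVal D z i W := by
    intro i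
    unfold smVal
    by_cases hW : D i ⊆ W
    · have h1 : D i ⊆ W ∪ Q := hW.trans Finset.subset_union_left
      simp [h1, hW]
    · by_cases h1 : D i ⊆ W ∪ Q
      · simp [h1, hW, min_eq_right (hb i), min_le_right]
      · simp [h1, hW]
  have hsum2 : (∑ i, min (b i) (smVal D z i (W ∪ Q))) - (∑ i, min (b i) (smVal D z i W)) ≤
      (∑ i, smVal D z i (W ∪ Q)) - (∑ i, smVal D z i W) := by
    rw [← Finset.sum_sub_distrib, ← Finset.sum_sub_distrib]
    exact Finset.sum_le_sum fun i _ => key2 i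
  have hSW : SW D z C W ≤ SW D z C (W ∪ Q) := by
    have := hPEU
    unfold PE at this
    unfold SW
    linarith
  exact ⟨fundU, hSW, W ∪ Q, fundU, fun S hS => (hWopt S hS).trans hSW, Finset.subset_union_right⟩
end

section
/- Suppose valuations are symmetric (v_i(S) depends only on |S|) and projects are ordered with C_1 ≤ C_2 ≤ … ≤ C_m. If W* ⊆ M is any WP-fundable set with |W*| = ℓ, then the prefix set [ℓ] = {1,…,ℓ} is also WP-fundable and SW([ℓ]) ≥ SW(W*); consequently, the set [k*] maximizing SW([k]) over all k such that [k] is WP-fundable is a UWO-WP outcome. -/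
open Finset

/-- The prefix `{1, …, k}` of projects (0-indexed: indices `< k`). -/
def prefixSet (m k : ℕ) : Finset (Fin m) :=
  Finset.univ.filter (fun j : Fin m => (j : ℕ) < k)

lemma strictMono_val_le {ℓ : ℕ} (g : Fin ℓ → ℕ) (hg : StrictMono g) :
    ∀ k : Fin ℓ, (k : ℕ) ≤ g k := by
  intro k
  obtain ⟨j, hj⟩ := k
  induction j with
  | zero => exact Nat.zero_le _
  | succ i ih =>
    have hi : i < ℓ := Nat.lt_of_succ_lt hj
    have h1 := hg (show (⟨i, hi⟩ : Fin ℓ) < ⟨i + 1, hj⟩ by simp [Fin.lt_def])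
    have h2 := ih hi
    simp only [Fin.val_mk] at h1 h2 ⊢
    omega

lemma prefix_eq_map (m k : ℕ) (h : k ≤ m) :
    prefixSet m k =
      (Finset.univ : Finset (Fin k)).map ⟨Fin.castLE h, Fin.castLE_injective h⟩ := by
  ext j
  simp only [prefixSet, mem_filter, mem_univ, true_and, mem_map,
    Function.Embedding.coeFn_mk]
  constructor
  · intro hj
    exact ⟨⟨(j : ℕ), hj⟩, by simp [Fin.castLE, Fin.ext_iff]⟩
  · rintro ⟨a, rfl⟩
    exact a.2

lemma prefix_card (m k : ℕ) (h : k ≤ m) : (prefixSet m k).card = k := by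
  rw [prefix_eq_map m k h, card_map, card_univ, Fintype.card_fin]

lemma prefix_cost_le (m : ℕ) (C : Fin m → ℝ)
    (hCmono : ∀ j k : Fin m, j ≤ k → C j ≤ C k)
    (W : Finset (Fin m)) (h : W.card ≤ m) :
    ∑ j ∈ prefixSet m W.card, C j ≤ ∑ j ∈ W, C j := by
  set f := W.orderEmbOfFin rfl with hf
  have hW : ∑ j ∈ W, C j = ∑ a : Fin W.card, C (f a) := by
    refine (Finset.sum_bij (fun a _ => f a) (fun a _ => W.orderEmbOfFin_mem rfl a)
      (fun a _ a' _ hac => f.injective hac) (fun j hj => ?_) (fun a _ => rfl)).symm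
    have : j ∈ Set.range f := by rw [hf, Finset.range_orderEmbOfFin]; exact hj
    obtain ⟨a, ha⟩ := this
    exact ⟨a, Finset.mem_univ a, ha⟩
  rw [prefix_eq_map m W.card h, Finset.sum_map, hW]
  apply Finset.sum_le_sum
  intro a _
  apply hCmono
  show (Fin.castLE h a : ℕ) ≤ (f a : ℕ)
  have : ((Fin.castLE h a : Fin m) : ℕ) = (a : ℕ) := rfl
  rw [this]
  exact strictMono_val_le (fun k => (f k : ℕ))
    (fun x y hxy => by exact_mod_cast f.strictMono hxy) a

/-- Algorithm for symmetric valuations: if `W*` is WP-fundable with `|W*| = ℓ`, then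
the cheapest-`ℓ` prefix is WP-fundable with weakly greater welfare; consequently the
best fundable prefix is a UWO-WP outcome. -/
theorem symmetric_prefix_optimal (n m : ℕ) (b : Fin n → ℝ)
    (v : Fin n → Finset (Fin m) → ℝ) (C : Fin m → ℝ)
    (hb : ∀ i, 0 ≤ b i) (hC0 : ∀ j, 0 ≤ C j)
    (hCmono : ∀ j k : Fin m, j ≤ k → C j ≤ C k)
    (hsym : ∀ i (S T : Finset (Fin m)), S.card = T.card → v i S = v i T)
    (hmono : ∀ i (S T : Finset (Fin m)), S ⊆ T → v i S ≤ v i T)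
    (kstar : ℕ) (hkstar : kstar ≤ m)
    (hkfund : ∑ j ∈ prefixSet m kstar, C j
        ≤ ∑ i, min (b i) (v i (prefixSet m kstar)))
    (hkmax : ∀ k ≤ m,
        (∑ j ∈ prefixSet m k, C j ≤ ∑ i, min (b i) (v i (prefixSet m k))) →
        (∑ i, v i (prefixSet m k)) - ∑ j ∈ prefixSet m k, C j
          ≤ (∑ i, v i (prefixSet m kstar)) - ∑ j ∈ prefixSet m kstar, C j) :
    (∀ Wstar : Finset (Fin m),
      (∑ j ∈ Wstar, C j ≤ ∑ i, min (b i) (v i Wstar)) →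
      (∑ j ∈ prefixSet m Wstar.card, C j
          ≤ ∑ i, min (b i) (v i (prefixSet m Wstar.card))) ∧
      (∑ i, v i Wstar) - ∑ j ∈ Wstar, C j
        ≤ (∑ i, v i (prefixSet m Wstar.card)) - ∑ j ∈ prefixSet m Wstar.card, C j) ∧
    (∀ W : Finset (Fin m),
      (∑ j ∈ W, C j ≤ ∑ i, min (b i) (v i W)) →
      (∑ i, v i W) - ∑ j ∈ W, C j
        ≤ (∑ i, v i (prefixSet m kstar)) - ∑ j ∈ prefixSet m kstar, C j) := by
  have key : ∀ W : Finset (Fin m),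
      (∑ j ∈ W, C j ≤ ∑ i, min (b i) (v i W)) →
      (∑ j ∈ prefixSet m W.card, C j
          ≤ ∑ i, min (b i) (v i (prefixSet m W.card))) ∧
      (∑ i, v i W) - ∑ j ∈ W, C j
        ≤ (∑ i, v i (prefixSet m W.card)) - ∑ j ∈ prefixSet m W.card, C j := by
    intro W hWfund
    have hWm : W.card ≤ m := by
      have := Finset.card_le_univ W
      simpa using this
    have hcost : ∑ j ∈ prefixSet m W.card, C j ≤ ∑ j ∈ W, C j :=
      prefix_cost_le m C hCmono W hWm
    have hveq : ∀ i, v i (prefixSet m W.card) = v i W := fun i =>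
      hsym i _ _ (prefix_card m W.card hWm)
    constructor
    · calc ∑ j ∈ prefixSet m W.card, C j ≤ ∑ j ∈ W, C j := hcost
        _ ≤ ∑ i, min (b i) (v i W) := hWfund
        _ = ∑ i, min (b i) (v i (prefixSet m W.card)) := by
            simp_rw [hveq]
    · have : ∑ i, v i W = ∑ i, v i (prefixSet m W.card) := by simp_rw [hveq]
      rw [this]
      linarith
  refine ⟨key, fun W hW => ?_⟩
  have hWm : W.card ≤ m := by
    have := Finset.card_le_univ W
    simpa using this
  obtain ⟨hf, hsw⟩ := key W hW
  exact hsw.trans (hkmax W.card hWm hf)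
end

section
/- Given integers a_1, …, a_m with total sum 2γ, consider the single-agent instance with additive valuation v_1(S) = ∑_{i∈S} a_i, budget b_1 = γ, and project costs C_i = a_i/2. Then max over S ⊆ {1,…,m} of min(γ, ∑_{i∈S} a_i) − ∑_{i∈S} a_i/2 is at least γ/2 if and only if there exists S* ⊆ {1,…,m} with ∑_{i∈S*} a_i = γ. -/
open Finset

/-- Reduction from PARTITION: for nonnegative `a` summing to `2γ`, an excess
payment of `γ/2` can be extracted in the single-agent instance (budget `γ`,
costs `aᵢ/2`) iff some subset of the `aᵢ` sums to `γ`. -/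
theorem maxPE_iff_partition (m : ℕ) (a : Fin m → ℝ) (γ : ℝ)
    (ha : ∀ i, 0 ≤ a i) (hsum : ∑ i, a i = 2 * γ) :
    (∃ S : Finset (Fin m),
        γ / 2 ≤ min γ (∑ i ∈ S, a i) - (∑ i ∈ S, a i) / 2)
    ↔ ∃ S : Finset (Fin m), ∑ i ∈ S, a i = γ := by
  constructor
  · rintro ⟨S, hS⟩
    refine ⟨S, ?_⟩
    rcases le_total (∑ i ∈ S, a i) γ with h | h
    · rw [min_eq_right h] at hS; linarith
    · rw [min_eq_left h] at hS; linarith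
  · rintro ⟨S, hS⟩
    exact ⟨S, by rw [hS, min_self]; linarith⟩
end

section
/- Let Z be a finite set with |Z| = n where 3 divides n, and let S be a family of 3-element subsets of Z. Construct the instance where each agent i ∈ Z has budget b_i = 1/3 + 1/n, and for each subset s_j ∈ S there is a project j with unit cost; agent i values project j at 1/3 + 1/n if z_i ∈ s_j, else 0, with additive valuations capped by min against budget as min(b_i, v_i(W)). Then max over W ⊆ S of ∑_{i∈Z} (1/3 + 1/n)·min(1, |{j∈W : z_i ∈ s_j}|) − |W| ≥ 1 if and only if S contains an exact cover of Z (a subfamily S' such that every element of Z lies in exactly one member of S'). -/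
open Finset

lemma maxPE_double_count {n : ℕ} (W : Finset (Finset (Fin n))) :
    ∑ i : Fin n, (W.filter (fun s => i ∈ s)).card = ∑ s ∈ W, s.card := by
  simp_rw [Finset.card_filter]
  rw [Finset.sum_comm]
  refine Finset.sum_congr rfl fun s _ => ?_
  simp [Finset.sum_ite_mem, Finset.univ_inter]

/-- Reduction from Exact Cover by 3-Sets: in the instance with agents `Z = Fin n`,
budgets `1/3 + 1/n`, and a unit-cost project per triple, an excess payment of at
least `1` can be extracted iff `S` contains an exact cover of `Z`. -/
theorem maxPE_one_iff_exact_cover (n : ℕ) (hn : 0 < n) (h3 : 3 ∣ n)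
    (S : Finset (Finset (Fin n))) (hS : ∀ s ∈ S, s.card = 3) :
    (∃ W ⊆ S,
        (1 : ℝ) ≤ (∑ i : Fin n, (1 / 3 + 1 / (n : ℝ)) *
            min 1 (((W.filter (fun s => i ∈ s)).card : ℝ))) - (W.card : ℝ))
    ↔ ∃ S' ⊆ S, ∀ i : Fin n, ∃! s : Finset (Fin n), s ∈ S' ∧ i ∈ s := by
  have hnR : (0:ℝ) < (n:ℝ) := by exact_mod_cast hn
  constructor
  · rintro ⟨W, hWS, hineq⟩
    set c : Fin n → ℕ := fun i => (W.filter (fun s => i ∈ s)).card with hc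
    have hsum : ∑ i, c i = 3 * W.card := by
      rw [hc]
      simp only
      rw [maxPE_double_count]
      rw [Finset.sum_congr rfl (fun s hs => hS s (hWS hs))]
      simp [mul_comm]
    have hmin : ∀ i : Fin n, min (1:ℝ) ((c i : ℝ)) = if c i ≠ 0 then 1 else 0 := by
      intro i
      by_cases h : c i = 0
      · simp [h]
      · have h1 : (1:ℝ) ≤ (c i : ℝ) := by
          exact_mod_cast Nat.one_le_iff_ne_zero.mpr h
        simp [h, min_eq_left h1]
    set T : Finset (Fin n) := Finset.univ.filter (fun i => c i ≠ 0) with hT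
    have hsumval : ∑ i : Fin n, (1 / 3 + 1 / (n : ℝ)) *
        min 1 (((W.filter (fun s => i ∈ s)).card : ℝ))
        = (1/3 + 1/(n:ℝ)) * T.card := by
      rw [← Finset.mul_sum]
      congr 1
      calc ∑ i : Fin n, min (1:ℝ) ((W.filter (fun s => i ∈ s)).card : ℝ)
          = ∑ i : Fin n, (if c i ≠ 0 then (1:ℝ) else 0) := by
            exact Finset.sum_congr rfl fun i _ => hmin i
        _ = (T.card : ℝ) := by rw [Finset.sum_boole]
    rw [hsumval] at hineq
    -- basic bounds
    have htn : T.card ≤ n := by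
      simpa using (Finset.card_filter_le Finset.univ (fun i => c i ≠ 0))
    have ht3w : T.card ≤ 3 * W.card := by
      rw [← hsum]
      calc T.card = ∑ _i ∈ T, 1 := by simp
        _ ≤ ∑ i ∈ T, c i := Finset.sum_le_sum fun i hi => by
            have := (Finset.mem_filter.mp hi).2
            omega
        _ ≤ ∑ i : Fin n, c i := Finset.sum_le_sum_of_subset (Finset.subset_univ T)
    -- clear denominators: 3n(1 + w) ≤ (n+3) t
    have hkey : 3*(n:ℝ)*(1 + W.card) ≤ ((n:ℝ)+3) * T.card := by
      have h1 : (1:ℝ) + W.card ≤ (1/3 + 1/(n:ℝ)) * T.card := by linarith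
      have h2 : (1/3 + 1/(n:ℝ)) * T.card = ((n:ℝ)+3) * T.card / (3*n) := by
        field_simp
      rw [h2] at h1
      have h3n : (0:ℝ) < 3*(n:ℝ) := by positivity
      calc 3*(n:ℝ)*(1 + W.card) ≤ 3*(n:ℝ) * (((n:ℝ)+3) * T.card / (3*n)) :=
            mul_le_mul_of_nonneg_left h1 (le_of_lt h3n)
        _ = ((n:ℝ)+3) * T.card := by field_simp
    have htnR : (T.card : ℝ) ≤ (n:ℝ) := by exact_mod_cast htn
    have ht3wR : (T.card : ℝ) ≤ 3 * (W.card : ℝ) := by exact_mod_cast ht3w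
    have hge : (n:ℝ) ≤ 3 * (W.card : ℝ) := by nlinarith
    have hle : 3 * (W.card : ℝ) ≤ (n:ℝ) := by nlinarith
    have heq : 3 * W.card = n := by
      have : (3:ℝ) * (W.card : ℝ) = (n:ℝ) := le_antisymm hle hge
      exact_mod_cast this
    have htn' : (n:ℝ) ≤ (T.card : ℝ) := by nlinarith
    have hTuniv : T = Finset.univ := by
      apply Finset.eq_univ_of_card
      have : n ≤ T.card := by exact_mod_cast htn'
      simp only [Fintype.card_fin]
      omega
    have hcpos : ∀ i : Fin n, 1 ≤ c i := by
      intro i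
      have hi : i ∈ T := hTuniv ▸ Finset.mem_univ i
      have := (Finset.mem_filter.mp hi).2
      omega
    have hc1 : ∀ i : Fin n, c i = 1 := by
      have hs1 : ∑ _i : Fin n, 1 = ∑ i : Fin n, c i := by
        rw [hsum]; simp [heq]
      have := (Finset.sum_eq_sum_iff_of_le (fun i _ => hcpos i)).mp hs1
      intro i; exact (this i (Finset.mem_univ i)).symm
    refine ⟨W, hWS, fun i => ?_⟩
    obtain ⟨a, ha⟩ := Finset.card_eq_one.mp (hc1 i)
    have haW : a ∈ W.filter (fun s => i ∈ s) := ha ▸ Finset.mem_singleton_self a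
    refine ⟨a, ⟨(Finset.mem_filter.mp haW).1, (Finset.mem_filter.mp haW).2⟩, ?_⟩
    rintro s ⟨hsW, hsi⟩
    have : s ∈ W.filter (fun t => i ∈ t) := Finset.mem_filter.mpr ⟨hsW, hsi⟩
    rw [ha] at this
    exact Finset.mem_singleton.mp this
  · rintro ⟨S', hS'S, hcov⟩
    refine ⟨S', hS'S, ?_⟩
    have hc1 : ∀ i : Fin n, (S'.filter (fun s => i ∈ s)).card = 1 := by
      intro i
      obtain ⟨s, ⟨hsW, hsi⟩, huniq⟩ := hcov i
      rw [Finset.card_eq_one]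
      refine ⟨s, ?_⟩
      ext t
      simp only [Finset.mem_filter, Finset.mem_singleton]
      constructor
      · rintro ⟨h1, h2⟩; exact huniq t ⟨h1, h2⟩
      · rintro rfl; exact ⟨hsW, hsi⟩
    have hcard : 3 * S'.card = n := by
      have := maxPE_double_count S'
      rw [Finset.sum_congr rfl (fun s hs => hS s (hS'S hs))] at this
      simp only [hc1, Finset.sum_const, smul_eq_mul, mul_one] at this
      simp only [Finset.card_univ, Fintype.card_fin] at this
      omega
    have hsumval : ∑ i : Fin n, (1 / 3 + 1 / (n : ℝ)) *
        min 1 (((S'.filter (fun s => i ∈ s)).card : ℝ))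
        = (n:ℝ) * (1/3 + 1/(n:ℝ)) := by
      have : ∀ i : Fin n, min (1:ℝ) (((S'.filter (fun s => i ∈ s)).card : ℝ)) = 1 := by
        intro i; rw [hc1 i]; simp
      simp only [this, mul_one, Finset.sum_const, Finset.card_univ, Fintype.card_fin,
        nsmul_eq_mul]
    rw [hsumval]
    have hw : (S'.card : ℝ) = (n:ℝ)/3 := by
      have : (3:ℝ) * (S'.card : ℝ) = (n:ℝ) := by exact_mod_cast hcard
      linarith
    rw [hw]
    have : (n:ℝ) * (1/3 + 1/(n:ℝ)) = (n:ℝ)/3 + 1 := by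
      field_simp
    linarith
end

section
/- In the exact-cover reduction instance (agents Z with |Z| = n divisible by 3, budgets 1/3 + 1/n, projects given by triples with unit cost), any subset W of projects achieving excess payment ∑_{i∈Z} (1/3+1/n)·min(1, |{j∈W : z_i∈s_j}|) − |W| ≥ 1 must satisfy |W| = n/3, every agent must value at least one project in W, and the triples {s_j : j ∈ W} are pairwise disjoint, so they form an exact cover of Z. -/
open Finset

/-- In the X3C reduction instance, any project set `W` extracting excess payment
at least `1` has exactly `n/3` projects, covers every agent, consists of pairwise
disjoint triples, and hence forms an exact cover of `Z`. -/
theorem maxPE_one_gives_exact_cover (n : ℕ) (hn : 0 < n) (h3 : 3 ∣ n)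
    (S : Finset (Finset (Fin n))) (hS : ∀ s ∈ S, s.card = 3)
    (W : Finset (Finset (Fin n))) (hW : W ⊆ S)
    (hex : (1 : ℝ) ≤ (∑ i : Fin n, (1 / 3 + 1 / (n : ℝ)) *
        min 1 (((W.filter (fun s => i ∈ s)).card : ℝ))) - (W.card : ℝ)) :
    W.card = n / 3 ∧
    (∀ i : Fin n, ∃ s ∈ W, i ∈ s) ∧
    (∀ s ∈ W, ∀ t ∈ W, s ≠ t → Disjoint s t) ∧
    (∀ i : Fin n, ∃! s : Finset (Fin n), s ∈ W ∧ i ∈ s) := by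
  classical
  have hN : (0:ℝ) < (n:ℝ) := by exact_mod_cast hn
  set c : Fin n → ℕ := fun i => (W.filter (fun s => i ∈ s)).card with hc
  -- total count
  have hsum_c : ∑ i, c i = 3 * W.card := by
    have h0 : ∀ i : Fin n, c i = ∑ s ∈ W, if i ∈ s then 1 else 0 := fun i =>
      Finset.card_filter _ _
    have h1 : ∀ s ∈ W, (∑ i : Fin n, if i ∈ s then 1 else 0) = 3 := by
      intro s hs
      simp [Finset.sum_ite_mem, hS s (hW hs)]
    calc ∑ i, c i = ∑ i : Fin n, ∑ s ∈ W, if i ∈ s then 1 else 0 :=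
          Finset.sum_congr rfl (fun i _ => h0 i)
    _ = ∑ s ∈ W, ∑ i : Fin n, if i ∈ s then 1 else 0 := Finset.sum_comm
    _ = ∑ _s ∈ W, (3:ℕ) := Finset.sum_congr rfl h1
    _ = 3 * W.card := by rw [Finset.sum_const, smul_eq_mul, mul_comm]
  set k : ℕ := (Finset.univ.filter (fun i : Fin n => 0 < c i)).card with hk
  have hmin : ∀ i : Fin n, min 1 ((c i : ℝ)) = if 0 < c i then 1 else 0 := by
    intro i
    by_cases h : 0 < c i
    · have h1 : (1:ℝ) ≤ (c i : ℝ) := by exact_mod_cast h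
      simp [h, min_eq_left h1]
    · have h0 : c i = 0 := Nat.eq_zero_of_not_pos h
      simp [h, h0]
  have hsum_min : ∑ i : Fin n, min 1 ((c i : ℝ)) = (k : ℝ) := by
    rw [Finset.sum_congr rfl (fun i _ => hmin i), Finset.sum_boole, hk]
  -- rewrite hex
  have hex' : (1:ℝ) ≤ (1/3 + 1/(n:ℝ)) * (k:ℝ) - (W.card:ℝ) := by
    rw [← Finset.mul_sum, hsum_min] at hex
    exact hex
  have hkn : k ≤ n := by
    have := Finset.card_filter_le (Finset.univ : Finset (Fin n)) (fun i : Fin n => 0 < c i)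
    simpa using this
  have hk3 : k ≤ 3 * W.card := by
    rw [← hsum_c]
    calc k = ∑ i ∈ Finset.univ.filter (fun i : Fin n => 0 < c i), 1 := by simp [hk]
    _ ≤ ∑ i ∈ Finset.univ.filter (fun i : Fin n => 0 < c i), c i :=
        Finset.sum_le_sum (fun i hi => (Finset.mem_filter.mp hi).2)
    _ ≤ ∑ i, c i := Finset.sum_le_sum_of_subset (Finset.filter_subset _ _)
  -- real arithmetic
  have hknR : (k:ℝ) ≤ (n:ℝ) := by exact_mod_cast hkn
  have hk3R : (k:ℝ) ≤ 3 * (W.card:ℝ) := by exact_mod_cast hk3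
  have key : (n:ℝ) ≤ ((n:ℝ)/3 + 1) * (k:ℝ) - (n:ℝ) * (W.card:ℝ) := by
    have h := mul_le_mul_of_nonneg_left hex' hN.le
    have heq : (n:ℝ) * ((1/3 + 1/(n:ℝ)) * (k:ℝ) - (W.card:ℝ))
        = ((n:ℝ)/3 + 1) * (k:ℝ) - (n:ℝ) * (W.card:ℝ) := by
      field_simp
    rw [mul_one, heq] at h
    exact h
  have hpos : (0:ℝ) ≤ (n:ℝ)/3 + 1 := by positivity
  have h3W : 3 * W.card = n := by
    have hle : 3 * (W.card:ℝ) ≤ (n:ℝ) := by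
      nlinarith [mul_le_mul_of_nonneg_left hknR hpos, key, hN]
    have hge : (n:ℝ) ≤ 3 * (W.card:ℝ) := by
      nlinarith [mul_le_mul_of_nonneg_left hk3R hpos, key]
    have : (3 * W.card : ℝ) = (n:ℝ) := by linarith
    exact_mod_cast this
  have h3WR : (3:ℝ) * (W.card:ℝ) = (n:ℝ) := by exact_mod_cast h3W
  have hkeqn : k = n := by
    have : (n:ℝ) ≤ (k:ℝ) := by nlinarith [key, hN, h3WR]
    have := le_antisymm hkn (by exact_mod_cast this)
    omega
  -- every agent covered
  have hall : ∀ i : Fin n, 0 < c i := by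
    have : Finset.univ.filter (fun i : Fin n => 0 < c i) = Finset.univ := by
      apply Finset.eq_univ_of_card
      simpa using hkeqn
    intro i
    have := Finset.mem_filter.mp (this ▸ Finset.mem_univ i)
    exact this.2
  -- each agent covered exactly once
  have hone : ∀ i : Fin n, c i = 1 := by
    have hsum1 : ∑ i : Fin n, c i = ∑ i : Fin n, 1 := by
      simp [hsum_c, h3W]
    have := (Finset.sum_eq_sum_iff_of_le (fun i _ => hall i)).mp hsum1.symm
    intro i
    exact (this i (Finset.mem_univ i)).symm
  have huniq : ∀ i : Fin n, ∃! s : Finset (Fin n), s ∈ W ∧ i ∈ s := by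
    intro i
    obtain ⟨s, hs⟩ := Finset.card_eq_one.mp (hone i)
    have hsmem : s ∈ W.filter (fun s => i ∈ s) := by rw [hs]; exact Finset.mem_singleton_self s
    have hsW := Finset.mem_filter.mp hsmem
    refine ⟨s, ⟨hsW.1, hsW.2⟩, ?_⟩
    intro t ht
    have : t ∈ W.filter (fun s => i ∈ s) := Finset.mem_filter.mpr ⟨ht.1, ht.2⟩
    rw [hs] at this
    exact Finset.mem_singleton.mp this
  refine ⟨by omega, fun i => ?_, fun s hs t ht hst => ?_, huniq⟩
  · obtain ⟨s, hs, _⟩ := huniq i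
    exact ⟨s, hs.1, hs.2⟩
  · rw [Finset.disjoint_left]
    intro i his hit
    obtain ⟨u, _, hu⟩ := huniq i
    exact hst ((hu s ⟨hs, his⟩).trans (hu t ⟨ht, hit⟩).symm)
end

section
/- In the gap reduction for UWO-WP: given instance I with n agents, m projects, and total value V = ∑_{i∈N} v_i(M), and threshold t, construct I^t by adding agent 0 with budget 0 valuing only a new project 0 at value (2f)·V (where f ≥ 1), and project 0 with cost t valued at 0 by all original agents. Then: (a) if t dollars of excess payment can be extracted from I in a WP manner (MaxPE(I) ≥ t), the optimal WP social welfare of I^t is at least 2f·V; and (b) any WP-fundable outcome of I^t that does not include project 0 has social welfare at most V. -/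
open Finset

/-- Restriction of a bundle over the extended project set `Option (Fin m)` to the
original projects. -/
def restrictBundle {m : ℕ} (W : Finset (Option (Fin m))) : Finset (Fin m) :=
  Finset.univ.filter (fun j : Fin m => some j ∈ W)

/-- Valuations in the gap instance `I^t`: the new agent `none` values only the new
project `none` at `2 f V`; original agents ignore the new project. -/
def gapVal {n m : ℕ} (v : Fin n → Finset (Fin m) → ℝ) (f V : ℝ) :
    Option (Fin n) → Finset (Option (Fin m)) → ℝ
  | none, W => if none ∈ W then 2 * f * V else 0
  | some i, W => v i (restrictBundle W)

/-- Costs in the gap instance `I^t`: the new project costs `t`. -/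
def gapCost {m : ℕ} (C : Fin m → ℝ) (t : ℝ) : Option (Fin m) → ℝ
  | none => t
  | some j => C j

/-- Budgets in the gap instance `I^t`: the new agent has zero budget. -/
def gapBudget {n : ℕ} (b : Fin n → ℝ) : Option (Fin n) → ℝ
  | none => 0
  | some i => b i

/-- Gap reduction for UWO-WP (Theorem 4.3 machinery): with `V = ∑ᵢ vᵢ(M)` and
`f ≥ 1`, (a) if `t` dollars of excess payment can be extracted in a WP manner
from `I`, then some WP-fundable bundle of `I^t` has welfare at least `2fV`; and
(b) any WP-fundable bundle of `I^t` omitting project `0` has welfare at most `V`. -/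
theorem gap_reduction (n m : ℕ) (v : Fin n → Finset (Fin m) → ℝ)
    (b : Fin n → ℝ) (C : Fin m → ℝ) (f t : ℝ)
    (hv0 : ∀ i S, 0 ≤ v i S)
    (hvmono : ∀ i (S T : Finset (Fin m)), S ⊆ T → v i S ≤ v i T)
    (hb : ∀ i, 0 ≤ b i) (hC : ∀ j, 0 ≤ C j) (ht : 0 ≤ t) (hf : 1 ≤ f) :
    ((∃ W : Finset (Fin m),
        t ≤ (∑ i, min (b i) (v i W)) - ∑ j ∈ W, C j) →
      ∃ W' : Finset (Option (Fin m)),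
        (∑ j ∈ W', gapCost C t j
          ≤ ∑ i : Option (Fin n), min (gapBudget b i) (gapVal v f (∑ i, v i Finset.univ) i W')) ∧
        2 * f * (∑ i, v i Finset.univ)
          ≤ (∑ i : Option (Fin n), gapVal v f (∑ i, v i Finset.univ) i W')
            - ∑ j ∈ W', gapCost C t j) ∧
    (∀ W' : Finset (Option (Fin m)),
      (∑ j ∈ W', gapCost C t j
        ≤ ∑ i : Option (Fin n), min (gapBudget b i) (gapVal v f (∑ i, v i Finset.univ) i W')) →
      none ∉ W' →
      (∑ i : Option (Fin n), gapVal v f (∑ i, v i Finset.univ) i W')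
          - ∑ j ∈ W', gapCost C t j
        ≤ ∑ i, v i Finset.univ) := by
 classical
  set V := ∑ i, v i Finset.univ with hV
  have hV0 : 0 ≤ V := Finset.sum_nonneg fun i _ => hv0 i _
  constructor
  · rintro ⟨W, hW⟩
    refine ⟨insert none (W.map ⟨some, Option.some_injective _⟩), ?_, ?_⟩
    · have hnn : (none : Option (Fin m)) ∉ W.map ⟨some, Option.some_injective _⟩ := by
        simp
      rw [Finset.sum_insert hnn, Finset.sum_map]
      have hrest : restrictBundle (insert none (W.map ⟨some, Option.some_injective _⟩)) = W := by
        ext j; simp [restrictBundle]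
      rw [Fintype.sum_option]
      have h0 : min (gapBudget b none) (gapVal v f V none
          (insert none (W.map ⟨some, Option.some_injective _⟩))) = 0 := by
        simp [gapBudget, gapVal]
        positivity
      rw [h0]
      simp only [gapVal, gapBudget, gapCost, hrest, Function.Embedding.coeFn_mk]
      linarith [hW]
    · have hnn : (none : Option (Fin m)) ∉ W.map ⟨some, Option.some_injective _⟩ := by
        simp
      rw [Finset.sum_insert hnn, Finset.sum_map, Fintype.sum_option]
      have hrest : restrictBundle (insert none (W.map ⟨some, Option.some_injective _⟩)) = W := by
        ext j; simp [restrictBundle]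
      simp only [gapVal, gapCost, hrest, Function.Embedding.coeFn_mk, Finset.mem_insert,
        true_or, if_pos, Or.inl rfl]
      have h1 : ∑ i, min (b i) (v i W) ≤ ∑ i, v i W :=
        Finset.sum_le_sum fun i _ => min_le_right _ _
      linarith [hW, h1]
  · intro W' hWP hn
    have hcost : 0 ≤ ∑ j ∈ W', gapCost C t j := by
      apply Finset.sum_nonneg
      intro j _
      cases j with
      | none => exact ht
      | some j => exact hC j
    rw [Fintype.sum_option]
    have h0 : gapVal v f V none W' = 0 := by simp [gapVal, hn]
    rw [h0]
    have h1 : ∑ i, gapVal v f V (some i) W' ≤ V := by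
      rw [hV]
      exact Finset.sum_le_sum fun i _ =>
        hvmono i _ _ (Finset.subset_univ _)
    linarith
end
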